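/- Let N ≥ 2 be an integer, α ∈ ℝ, and let v = (sin α, cos α) ∈ ℂ² be a real amplitude vector. Let β ∈ (0, π/2) satisfy sin β = 1/√N and cos β = √((N−1)/N), and set A = sin²β·sin α − sin β·cos β·cos α, B = sin α·cos²β + cos α·sin β·cos β, C = sin²β·sin α + sin β·cos β·cos α. Then for every φ ∈ ℝ, the one-step target probability satisfies |(A(φ)·v)₀|² = (A² − C²)·cos²φ + 2AB·cos φ + B² + C². -/

import Mathlib

/-!
With `s = sin β`, `c = cos β` and `e = exp (iφ)`, the hypotheses give `1/N = s²` and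
`√(N-1)/N = s c`, so the first component of `A(φ) v` is `p e² + q e + r` with real
`p = -s² sin α`, `q = -B`, `r = s c cos α`. Since `|e| = 1` and `p e + r e⁻¹` has real part
`(p + r) cos φ = -A cos φ` and imaginary part `(p - r) sin φ = -C sin φ`, its squared modulus is
`(A cos φ + B)² + C² sin² φ`, which is the claimed quadratic in `cos φ`.
-/

open Real Complex Matrix

/-- The generalized Grover iteration matrix with phase `φ` for a database of size `N`. -/
noncomputable def groverA (N : ℕ) (φ : ℝ) : Matrix (Fin 2) (Fin 2) ℂ :=
  !![Complex.exp (φ * Complex.I) * ((1 - Complex.exp (φ * Complex.I)) / (N : ℂ) - 1),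
     ((Real.sqrt ((N : ℝ) - 1) : ℂ) / (N : ℂ)) * (1 - Complex.exp (φ * Complex.I));
     ((Real.sqrt ((N : ℝ) - 1) : ℂ) / (N : ℂ)) * Complex.exp (φ * Complex.I) *
       (1 - Complex.exp (φ * Complex.I)),
     -(1 / (N : ℂ) + (1 - 1 / (N : ℂ)) * Complex.exp (φ * Complex.I))]

/-- The one-step target probability: the squared modulus of the first component of `A(φ)·v`. -/
noncomputable def targetProb (N : ℕ) (φ : ℝ) (v : Fin 2 → ℂ) : ℝ :=
  ‖(groverA N φ).mulVec v 0‖ ^ 2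

theorem Complex.sq_norm_quadratic_exp_mul_I (p q r φ : ℝ) :
    ‖p * exp (φ * I) ^ 2 + q * exp (φ * I) + r‖ ^ 2 =
      ((p + r) * Real.cos φ + q) ^ 2 + ((p - r) * Real.sin φ) ^ 2 := by
  have hfactor : p * exp (φ * I) ^ 2 + q * exp (φ * I) + r =
      exp (φ * I) * (((p + r) * Real.cos φ + q : ℝ) + ((p - r) * Real.sin φ : ℝ) * I) := by
    rw [exp_mul_I]
    push_cast
    linear_combination (-r) * Complex.sin_sq_add_cos_sq (φ : ℂ) + r * Complex.sin φ ^ 2 * I_sq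
  rw [hfactor, norm_mul, norm_exp_ofReal_mul_I, one_mul, Complex.sq_norm, normSq_add_mul_I]

theorem groverA_mulVec_zero (N : ℕ) (φ : ℝ) (a b : ℂ) :
    (groverA N φ *ᵥ ![a, b]) 0 = -(a / N) * exp (φ * I) ^ 2
      + (a / N - a - √((N : ℝ) - 1) / N * b) * exp (φ * I) + √((N : ℝ) - 1) / N * b := by
  simp only [groverA, mulVec, dotProduct, Fin.sum_univ_two, of_apply, cons_val', cons_val_zero,
    cons_val_one, empty_val', cons_val_fin_one]
  ring

theorem stmt_7_general (N : ℕ) (α : ℝ)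
    (v : Fin 2 → ℂ) (hv : v = ![(Real.sin α : ℂ), (Real.cos α : ℂ)])
    (β : ℝ)
    (hsin : Real.sin β = 1 / Real.sqrt N)
    (hcos : Real.cos β = Real.sqrt (((N : ℝ) - 1) / N))
    (A B C : ℝ)
    (hA : A = Real.sin β ^ 2 * Real.sin α - Real.sin β * Real.cos β * Real.cos α)
    (hB : B = Real.sin α * Real.cos β ^ 2 + Real.cos α * Real.sin β * Real.cos β)
    (hC : C = Real.sin β ^ 2 * Real.sin α + Real.sin β * Real.cos β * Real.cos α)
    (φ : ℝ) :
    targetProb N φ v =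
      (A ^ 2 - C ^ 2) * Real.cos φ ^ 2 + 2 * A * B * Real.cos φ + B ^ 2 + C ^ 2 := by
  set s := Real.sin β
  set c := Real.cos β
  have hs2 : ((s ^ 2 : ℝ) : ℂ) = (N : ℂ)⁻¹ := by
    rw [hsin, div_pow, one_pow, sq_sqrt N.cast_nonneg, one_div]
    simp
  have hsc : ((s * c : ℝ) : ℂ) = √((N : ℝ) - 1) / N := by
    rw [hsin, hcos, sqrt_div' _ N.cast_nonneg, div_mul_div_comm, one_mul,
      mul_self_sqrt N.cast_nonneg]
    simp
  have hfirst : (groverA N φ *ᵥ v) 0 = ((-(s ^ 2 * Real.sin α) : ℝ) : ℂ) * exp (φ * I) ^ 2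
      + ((-B : ℝ) : ℂ) * exp (φ * I) + ((s * c * Real.cos α : ℝ) : ℂ) := by
    rw [hv, groverA_mulVec_zero, div_eq_mul_inv _ (N : ℂ), ← hs2, ← hsc, hB]
    have hpyth : (s : ℂ) ^ 2 + (c : ℂ) ^ 2 = 1 := by exact_mod_cast Real.sin_sq_add_cos_sq β
    simp only [ofReal_neg, ofReal_mul, ofReal_add, ofReal_pow]
    linear_combination (Real.sin α : ℂ) * exp (φ * I) * hpyth
  have hplus : -(s ^ 2 * Real.sin α) + s * c * Real.cos α = -A := by rw [hA]; ring
  have hminus : -(s ^ 2 * Real.sin α) - s * c * Real.cos α = -C := by rw [hC]; ring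
  rw [targetProb, hfirst, Complex.sq_norm_quadratic_exp_mul_I, hplus, hminus]
  linear_combination C ^ 2 * Real.sin_sq_add_cos_sq φ

theorem stmt_7 (N : ℕ) (hN : 2 ≤ N) (α : ℝ)
    (v : Fin 2 → ℂ) (hv : v = ![(Real.sin α : ℂ), (Real.cos α : ℂ)])
    (β : ℝ) (hβ : β ∈ Set.Ioo 0 (Real.pi / 2))
    (hsin : Real.sin β = 1 / Real.sqrt N)
    (hcos : Real.cos β = Real.sqrt (((N : ℝ) - 1) / N))
    (A B C : ℝ)
    (hA : A = Real.sin β ^ 2 * Real.sin α - Real.sin β * Real.cos β * Real.cos α)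
    (hB : B = Real.sin α * Real.cos β ^ 2 + Real.cos α * Real.sin β * Real.cos β)
    (hC : C = Real.sin β ^ 2 * Real.sin α + Real.sin β * Real.cos β * Real.cos α)
    (φ : ℝ) :
    targetProb N φ v =
      (A ^ 2 - C ^ 2) * Real.cos φ ^ 2 + 2 * A * B * Real.cos φ + B ^ 2 + C ^ 2 :=
  stmt_7_general N α v hv β hsin hcos A B C hA hB hC φ
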